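/- arXiv:quant-ph/9807045 — 4 statements merged into one kernel-verified Lean document; each statement's English description precedes it below -/
import Mathlib

section
/- The two factorizations of the baker's map propagator agree: as bounded operators on L²(ℝ), S∘(L + X^{−1}∘R)∘(E_p + Y^{−1/2}∘O_p) = (E_x + X^{−1/2}∘O_x)∘(B + Y^{−1}∘T)∘S. -/
open MeasureTheory Filter Topology

noncomputable section

/-- The Hilbert space `L²(ℝ, ℂ)` with inner product `⟪f,g⟫ = ∫ conj(f x) · g x dx`. -/
abbrev HL2 : Type := MeasureTheory.Lp ℂ 2 (MeasureTheory.volume : MeasureTheory.Measure ℝ)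

/-- Indicator of `⋃ₖ [k, k+1/2)`. -/
def chiL (x : ℝ) : ℂ := if Int.fract x < 1/2 then 1 else 0

/-- Indicator of `⋃ₖ [k+1/2, k+1)`. -/
def chiR (x : ℝ) : ℂ := if 1/2 ≤ Int.fract x then 1 else 0

/-- Indicator of `⋃ₖ [2k, 2k+1)`. -/
def chiE (p : ℝ) : ℂ := if Even ⌊p⌋ then 1 else 0

/-- Indicator of `⋃ₖ [2k+1, 2k+2)`. -/
def chiO (p : ℝ) : ℂ := if Odd ⌊p⌋ then 1 else 0

/-- The `hbar`-scaled Fourier integral formula `(2πhbar)^{−1/2} ∫ e^{−ipx/hbar} f(x) dx`. -/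
def fourierFormula (hbar : ℝ) (f : ℝ → ℂ) (p : ℝ) : ℂ :=
  ((Real.sqrt (2 * Real.pi * hbar) : ℝ) : ℂ)⁻¹ *
    ∫ x : ℝ, Complex.exp (-(Complex.I * (p : ℂ) * (x : ℂ) / (hbar : ℂ))) * f x


/-!
Write `a = χ_l + e^{-ix/ħ} χ_r` and `b = χ_e + e^{-ix/2ħ} χ_o`, so that `b x = a (x/2)`.
In position space `L + X^{-1} R` and `E_x + X^{-1/2} O_x` are multiplication by `a` and `b`, so
the dilation `S` intertwines them. Under `𝓕` the translations `Y^s` become modulations, so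
`E_p + Y^{-1/2} O_p` and `B + Y^{-1} T` are Fourier multipliers by `b` and `a`; as `𝓕 S 𝓕⁻¹` is
the inverse dilation, `S (E_p + Y^{-1/2} O_p) = (B + Y^{-1} T) S`. Moving `S` through both
factors turns one side into the other.

The rule for `𝓕 S` is proved as `S 𝓕 S = 𝓕`, an identity between bounded operators that can be
checked on integrable functions and extended by density.
-/

open Complex

section Multipliers

variable {α E : Type*} [MeasurableSpace α] {μ : Measure α} {p : ENNReal}
  [NormedAddCommGroup E] [NormedSpace ℂ E]

/-- In the representation `U` (the identity for position space, `𝓕` for momentum space),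
`A` is multiplication by `m`. -/
def ActsAsMul (U : E →+ Lp ℂ p μ) (A : E →L[ℂ] E) (m : α → ℂ) : Prop :=
  ∀ f, U (A f) =ᵐ[μ] fun x => m x * U f x

theorem ActsAsMul.add_comp {U : E →+ Lp ℂ p μ} {A B C : E →L[ℂ] E} {a b c : α → ℂ}
    (hA : ActsAsMul U A a) (hB : ActsAsMul U B b) (hC : ActsAsMul U C c) :
    ActsAsMul U (A + C ∘L B) (fun x => a x + c x * b x) := by
  intro f
  filter_upwards [Lp.coeFn_add (U (A f)) (U (C (B f))), hA f, hB f, hC (B f)]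
    with x hsum hAx hBx hCx
  simp only [add_apply, ContinuousLinearMap.comp_apply, map_add, hsum,
    Pi.add_apply, hAx, hCx, hBx]
  ring

theorem ActsAsMul.comp_eq_comp {U : E →+ Lp ℂ p μ} (hU : Function.Injective U)
    {S A B : E →L[ℂ] E} {a b : α → ℂ} {c : ℂ} {φ : α → α}
    (hφ : Measure.QuasiMeasurePreserving φ μ μ)
    (hS : ∀ f, U (S f) =ᵐ[μ] fun x => c * U f (φ x))
    (hA : ActsAsMul U A a) (hB : ActsAsMul U B b) (hab : ∀ x, a (φ x) = b x) :
    S ∘L A = B ∘L S := by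
  ext f : 1
  refine hU (Lp.ext ?_)
  filter_upwards [hS (A f), hφ.ae_eq_comp (hA f), hB (S f), hS f] with x hSA hAφ hBS hSf
  simp only [ContinuousLinearMap.comp_apply, hSA, hBS, hSf]
  rw [show U (A f) (φ x) = a (φ x) * U f (φ x) from hAφ, ← hab]
  ring

end Multipliers

theorem MeasureTheory.Lp.dense_setOf_integrable {α E : Type*} [MeasurableSpace α]
    {μ : Measure α} {p : ENNReal} [NormedAddCommGroup E] [Fact (1 ≤ p)] (hp : p ≠ ⊤) :
    Dense {f : Lp E p μ | Integrable f μ} :=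
  (Lp.simpleFunc.dense hp).mono fun f hf => by
    let g : Lp.simpleFunc E p μ := ⟨f, hf⟩
    exact ((SimpleFunc.memLp_iff_integrable (zero_lt_one.trans_le Fact.out).ne' hp).1
      (Lp.simpleFunc.memLp g)).congr (Lp.simpleFunc.toSimpleFunc_eq_toFun g)

theorem quasiMeasurePreserving_const_mul {a : ℝ} (ha : a ≠ 0) :
    Measure.QuasiMeasurePreserving (fun x : ℝ => a * x) volume volume :=
  Measure.quasiMeasurePreserving_smul volume ha

theorem quasiMeasurePreserving_div_const {a : ℝ} (ha : a ≠ 0) :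
    Measure.QuasiMeasurePreserving (fun x : ℝ => x / a) volume volume := by
  simpa only [div_eq_inv_mul] using quasiMeasurePreserving_const_mul (inv_ne_zero ha)

theorem even_floor_iff_fract_half_lt (x : ℝ) : Even ⌊x⌋ ↔ Int.fract (x / 2) < 1 / 2 := by
  have hx : x = 2 * ⌊x / 2⌋ + 2 * Int.fract (x / 2) := by
    linarith [Int.floor_add_fract (x / 2)]
  have h0 := Int.fract_nonneg (x / 2)
  have h1 := Int.fract_lt_one (x / 2)
  by_cases h : Int.fract (x / 2) < 1 / 2
  · have hfloor : ⌊x⌋ = 2 * ⌊x / 2⌋ :=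
      Int.floor_eq_iff.2 ⟨by push_cast; linarith, by push_cast; linarith⟩
    simp only [hfloor, even_two_mul, h]
  · have hfloor : ⌊x⌋ = 2 * ⌊x / 2⌋ + 1 :=
      Int.floor_eq_iff.2 ⟨by push_cast; linarith, by push_cast; linarith⟩
    simp only [hfloor, Int.not_even_two_mul_add_one, h]

theorem chiL_div_two (x : ℝ) : chiL (x / 2) = chiE x := by
  simp only [chiL, chiE, even_floor_iff_fract_half_lt]

theorem chiR_div_two (x : ℝ) : chiR (x / 2) = chiO x := by
  simp only [chiR, chiO, ← Int.not_even_iff_odd, even_floor_iff_fract_half_lt, not_lt]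

theorem chiE_add_exp_mul_chiO (hbar x : ℝ) :
    chiE x + cexp (I * ((-(1 / 2) : ℝ) : ℂ) * x / hbar) * chiO x
      = chiL (x / 2)
        + cexp (I * ((-1 : ℝ) : ℂ) * ((x / 2 : ℝ) : ℂ) / hbar) * chiR (x / 2) := by
  rw [chiL_div_two, chiR_div_two]
  congr 3
  push_cast
  ring

section FourierFormula

variable (hbar : ℝ)

theorem fourierFormula_congr_ae {f g : ℝ → ℂ} (h : f =ᵐ[volume] g) :
    fourierFormula hbar f = fourierFormula hbar g := by
  funext p
  unfold fourierFormula
  congr 1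
  exact integral_congr_ae (h.mono fun x hx => by simp only [hx])

theorem fourierFormula_const_mul (c : ℂ) (f : ℝ → ℂ) (p : ℝ) :
    fourierFormula hbar (fun x => c * f x) p = c * fourierFormula hbar f p := by
  unfold fourierFormula
  simp_rw [mul_left_comm _ c, integral_const_mul]
  ring

theorem fourierFormula_comp_add_right (s : ℝ) (f : ℝ → ℂ) (p : ℝ) :
    fourierFormula hbar (fun x => f (x + s)) p
      = cexp (I * s * p / hbar) * fourierFormula hbar f p := by
  unfold fourierFormula
  have hphase : (fun x : ℝ => cexp (-(I * p * x / hbar)) * f (x + s)) = fun x =>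
      cexp (I * s * p / hbar) * (cexp (-(I * p * ((x + s : ℝ) : ℂ) / hbar)) * f (x + s)) := by
    funext x
    rw [← mul_assoc, ← Complex.exp_add]
    congr 2
    push_cast
    ring
  rw [hphase, integral_const_mul,
    integral_add_right_eq_self (fun u : ℝ => cexp (-(I * p * u / hbar)) * f u)]
  ring

theorem fourierFormula_comp_div {a : ℝ} (ha : a ≠ 0) (f : ℝ → ℂ) (p : ℝ) :
    fourierFormula hbar (fun x => f (x / a)) p = |a| * fourierFormula hbar f (a * p) := by
  unfold fourierFormula
  have hphase : ∀ x : ℝ, cexp (-(I * p * x / hbar))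
      = cexp (-(I * ((a * p : ℝ) : ℂ) * ((x / a : ℝ) : ℂ) / hbar)) := by
    intro x
    have ha' : (a : ℂ) ≠ 0 := by exact_mod_cast ha
    congr 1
    push_cast
    field_simp
  simp_rw [hphase]
  rw [Measure.integral_comp_div
    (fun u : ℝ => cexp (-(I * ((a * p : ℝ) : ℂ) * u / hbar)) * f u), Complex.real_smul]
  ring

end FourierFormula

theorem actsAsMul_fourier_of_translation {hbar s : ℝ} {𝓕 : HL2 ≃ₗᵢ[ℂ] HL2}
    (h𝓕 : ∀ f : HL2, Integrable (⇑f) volume →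
      ⇑(𝓕 f) =ᵐ[volume] fourierFormula hbar (⇑f))
    {Xs Ys : HL2 →L[ℂ] HL2}
    (hX : ∀ f : HL2, ⇑(Xs f) =ᵐ[volume] fun x => cexp (I * s * x / hbar) * f x)
    (hY : ∀ f : HL2, ⇑(Ys f) =ᵐ[volume] fun x => f (x + s)) :
    ActsAsMul (𝓕 : HL2 →+ HL2) Ys (fun p => cexp (I * s * p / hbar)) := by
  have hdense := Lp.dense_setOf_integrable (E := ℂ) (μ := (volume : Measure ℝ)) (p := 2)
    ENNReal.ofNat_ne_top
  have hintertwine : (fun f => 𝓕 (Ys f)) = fun f => Xs (𝓕 f) := by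
    refine Continuous.ext_on hdense (by fun_prop) (by fun_prop) fun f hf => Lp.ext ?_
    have hYf : Integrable (Ys f) volume := (hf.comp_add_right s).congr (hY f).symm
    filter_upwards [h𝓕 _ hYf, h𝓕 f hf, hX (𝓕 f)] with p hYp hfp hXp
    rw [hYp, hXp, hfp, fourierFormula_congr_ae hbar (hY f), fourierFormula_comp_add_right]
  intro f
  simpa only [AddMonoidHom.coe_coe, congrFun hintertwine f] using hX (𝓕 f)

theorem dilation_fourier_dilation_eq_fourier {hbar : ℝ} {𝓕 : HL2 ≃ₗᵢ[ℂ] HL2}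
    (h𝓕 : ∀ f : HL2, Integrable (⇑f) volume →
      ⇑(𝓕 f) =ᵐ[volume] fourierFormula hbar (⇑f))
    {S : HL2 →L[ℂ] HL2}
    (hS : ∀ f : HL2, ⇑(S f) =ᵐ[volume] fun x => ((Real.sqrt 2 : ℝ) : ℂ)⁻¹ * f (x / 2))
    (f : HL2) : S (𝓕 (S f)) = 𝓕 f := by
  have hdense := Lp.dense_setOf_integrable (E := ℂ) (μ := (volume : Measure ℝ)) (p := 2)
    ENNReal.ofNat_ne_top
  refine congrFun (Continuous.ext_on hdense (f := fun f => S (𝓕 (S f))) (g := fun f => 𝓕 f)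
    (S.continuous.comp (𝓕.continuous.comp S.continuous)) 𝓕.continuous
    fun f hf => Lp.ext ?_) f
  have hSf : Integrable (S f) volume := ((hf.comp_div two_ne_zero).const_mul _).congr (hS f).symm
  filter_upwards [hS (𝓕 (S f)),
    (quasiMeasurePreserving_div_const two_ne_zero).ae_eq_comp (h𝓕 _ hSf), h𝓕 f hf]
    with p hSp hFSp hfp
  rw [hSp, show 𝓕 (S f) (p / 2) = fourierFormula hbar (S f) (p / 2) from hFSp, hfp,
    fourierFormula_congr_ae hbar (hS f), fourierFormula_const_mul,
    fourierFormula_comp_div hbar two_ne_zero, mul_div_cancel₀ p two_ne_zero]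
  rw [← mul_assoc, ← mul_inv, ← Complex.ofReal_mul, Real.mul_self_sqrt zero_le_two, abs_two]
  push_cast
  field_simp

theorem fourier_dilation_ae_eq {hbar : ℝ} {𝓕 : HL2 ≃ₗᵢ[ℂ] HL2}
    (h𝓕 : ∀ f : HL2, Integrable (⇑f) volume →
      ⇑(𝓕 f) =ᵐ[volume] fourierFormula hbar (⇑f))
    {S : HL2 →L[ℂ] HL2}
    (hS : ∀ f : HL2, ⇑(S f) =ᵐ[volume] fun x => ((Real.sqrt 2 : ℝ) : ℂ)⁻¹ * f (x / 2))
    (f : HL2) :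
    ⇑(𝓕 (S f)) =ᵐ[volume] fun p => ((Real.sqrt 2 : ℝ) : ℂ) * 𝓕 f (2 * p) := by
  have h := (quasiMeasurePreserving_const_mul two_ne_zero).ae_eq_comp (hS (𝓕 (S f)))
  rw [dilation_fourier_dilation_eq_fourier h𝓕 hS] at h
  filter_upwards [h] with p hp
  rw [show 𝓕 f (2 * p) = ((Real.sqrt 2 : ℝ) : ℂ)⁻¹ * 𝓕 (S f) (2 * p / 2) from hp,
    mul_div_cancel_left₀ p two_ne_zero, mul_inv_cancel_left₀]
  exact_mod_cast (Real.sqrt_pos.2 two_pos).ne'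

theorem bakerPropagator_two_factorizations_general (hbar : ℝ)
    (𝓕 : HL2 ≃ₗᵢ[ℂ] HL2)
    (h𝓕 : ∀ f : HL2, Integrable (⇑f) volume → ⇑(𝓕 f) =ᵐ[volume] fourierFormula hbar (⇑f))
    (L R Ex Ox B T Ep Op S : HL2 →L[ℂ] HL2) (X Y : ℝ → HL2 →L[ℂ] HL2)
    (hL : ∀ f : HL2, ⇑(L f) =ᵐ[volume] fun x => chiL x * f x)
    (hR : ∀ f : HL2, ⇑(R f) =ᵐ[volume] fun x => chiR x * f x)
    (hEx : ∀ f : HL2, ⇑(Ex f) =ᵐ[volume] fun x => chiE x * f x)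
    (hOx : ∀ f : HL2, ⇑(Ox f) =ᵐ[volume] fun x => chiO x * f x)
    (hB : ∀ f : HL2, ⇑(𝓕 (B f)) =ᵐ[volume] fun p => chiL p * (𝓕 f) p)
    (hT : ∀ f : HL2, ⇑(𝓕 (T f)) =ᵐ[volume] fun p => chiR p * (𝓕 f) p)
    (hEp : ∀ f : HL2, ⇑(𝓕 (Ep f)) =ᵐ[volume] fun p => chiE p * (𝓕 f) p)
    (hOp : ∀ f : HL2, ⇑(𝓕 (Op f)) =ᵐ[volume] fun p => chiO p * (𝓕 f) p)
    (hX : ∀ s : ℝ, ∀ f : HL2,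
      ⇑(X s f) =ᵐ[volume] fun x => Complex.exp (Complex.I * s * x / hbar) * f x)
    (hY : ∀ s : ℝ, ∀ f : HL2, ⇑(Y s f) =ᵐ[volume] fun x => f (x + s))
    (hS : ∀ f : HL2, ⇑(S f) =ᵐ[volume] fun x => ((Real.sqrt 2 : ℝ) : ℂ)⁻¹ * f (x / 2)) :
    S ∘L (L + X (-1) ∘L R) ∘L (Ep + Y (-(1/2)) ∘L Op)
      = (Ex + X (-(1/2)) ∘L Ox) ∘L (B + Y (-1) ∘L T) ∘L S := by
  have hYF (s : ℝ) : ActsAsMul (𝓕 : HL2 →+ HL2) (Y s) (fun p => cexp (I * s * p / hbar)) :=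
    actsAsMul_fourier_of_translation h𝓕 (hX s) (hY s)
  have hposition : S ∘L (L + X (-1) ∘L R) = (Ex + X (-(1/2)) ∘L Ox) ∘L S :=
    ActsAsMul.comp_eq_comp (U := AddMonoidHom.id HL2) Function.injective_id
      (quasiMeasurePreserving_div_const two_ne_zero) hS
      (ActsAsMul.add_comp hL hR (hX (-1))) (ActsAsMul.add_comp hEx hOx (hX (-(1/2))))
      fun x => (chiE_add_exp_mul_chiO hbar x).symm
  have hmomentum : S ∘L (Ep + Y (-(1/2)) ∘L Op) = (B + Y (-1) ∘L T) ∘L S :=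
    ActsAsMul.comp_eq_comp 𝓕.injective (quasiMeasurePreserving_const_mul two_ne_zero)
      (fourier_dilation_ae_eq h𝓕 hS)
      (ActsAsMul.add_comp (U := (𝓕 : HL2 →+ HL2)) hEp hOp (hYF _))
      (ActsAsMul.add_comp (U := (𝓕 : HL2 →+ HL2)) hB hT (hYF _))
      fun p => by
        simpa only [mul_div_cancel_left₀ p two_ne_zero] using chiE_add_exp_mul_chiO hbar (2 * p)
  rw [← ContinuousLinearMap.comp_assoc, hposition, ContinuousLinearMap.comp_assoc, hmomentum]

/-- The two factorizations of the baker's map propagator agree: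
`S (L + X^{−1} R)(E_p + Y^{−1/2} O_p) = (E_x + X^{−1/2} O_x)(B + Y^{−1} T) S`
as bounded operators on `L²(ℝ)`. -/
theorem bakerPropagator_two_factorizations (hbar : ℝ) (hhb : 0 < hbar)
    (𝓕 : HL2 ≃ₗᵢ[ℂ] HL2)
    (h𝓕 : ∀ f : HL2, Integrable (⇑f) volume → ⇑(𝓕 f) =ᵐ[volume] fourierFormula hbar (⇑f))
    (L R Ex Ox B T Ep Op S : HL2 →L[ℂ] HL2) (X Y : ℝ → HL2 →L[ℂ] HL2)
    (hL : ∀ f : HL2, ⇑(L f) =ᵐ[volume] fun x => chiL x * f x)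
    (hR : ∀ f : HL2, ⇑(R f) =ᵐ[volume] fun x => chiR x * f x)
    (hEx : ∀ f : HL2, ⇑(Ex f) =ᵐ[volume] fun x => chiE x * f x)
    (hOx : ∀ f : HL2, ⇑(Ox f) =ᵐ[volume] fun x => chiO x * f x)
    (hB : ∀ f : HL2, ⇑(𝓕 (B f)) =ᵐ[volume] fun p => chiL p * (𝓕 f) p)
    (hT : ∀ f : HL2, ⇑(𝓕 (T f)) =ᵐ[volume] fun p => chiR p * (𝓕 f) p)
    (hEp : ∀ f : HL2, ⇑(𝓕 (Ep f)) =ᵐ[volume] fun p => chiE p * (𝓕 f) p)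
    (hOp : ∀ f : HL2, ⇑(𝓕 (Op f)) =ᵐ[volume] fun p => chiO p * (𝓕 f) p)
    (hX : ∀ s : ℝ, ∀ f : HL2,
      ⇑(X s f) =ᵐ[volume] fun x => Complex.exp (Complex.I * s * x / hbar) * f x)
    (hY : ∀ s : ℝ, ∀ f : HL2, ⇑(Y s f) =ᵐ[volume] fun x => f (x + s))
    (hS : ∀ f : HL2, ⇑(S f) =ᵐ[volume] fun x => ((Real.sqrt 2 : ℝ) : ℂ)⁻¹ * f (x / 2)) :
    S ∘L (L + X (-1) ∘L R) ∘L (Ep + Y (-(1/2)) ∘L Op)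
      = (Ex + X (-(1/2)) ∘L Ox) ∘L (B + Y (-1) ∘L T) ∘L S :=
  bakerPropagator_two_factorizations_general hbar 𝓕 h𝓕 L R Ex Ox B T Ep Op S X Y hL hR hEx hOx hB hT
    hEp hOp hX hY hS

end
end

section
/- Coherent-state expectation of quantized harmonics in the classical limit: for every (x₀,p₀) ∈ ℝ² and all integers a, b, the inner product ⟪φ_ħ^{x₀,p₀}, W_{a,b} φ_ħ^{x₀,p₀}⟫ converges to e^{2πi(a x₀ + b p₀)} as ħ → 0⁺. -/
open MeasureTheory Filter Topology

noncomputable section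

/-- The coherent state `φ_ħ^{x₀,p₀}(x) = (πħ)^{−1/4} e^{−(x−x₀)²/(2ħ)} e^{i p₀ x/ħ − i p₀ x₀/(2ħ)}`. -/
def coherent (hbar x₀ p₀ : ℝ) (x : ℝ) : ℂ :=
  (((Real.pi * hbar) ^ (-(1/4 : ℝ)) : ℝ) : ℂ) *
    Complex.exp (-(((x - x₀) ^ 2 / (2 * hbar) : ℝ) : ℂ)) *
    Complex.exp (Complex.I * ((p₀ * x / hbar : ℝ) : ℂ)
      - Complex.I * ((p₀ * x₀ / (2 * hbar) : ℝ) : ℂ))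

/-! The integrand `conj φ · W φ` is a complex Gaussian `exp (-x²/ħ + C x + D)`, so the Gaussian
integral gives the closed form `exp (2πi(a x₀ + b p₀) - π²ħ(a² + b² + 2iab))`: the factor
`(πħ)^{1/2}` of the integral cancels the normalisation `(πħ)^{-1/2}` of `|φ|²`. The closed form is
continuous in `ħ`, and its value at `ħ = 0` is the claimed limit. -/

section

open Complex ComplexConjugate Real

theorem inner_eq_integral_conj_mul_of_ae_eq {α : Type*} [MeasurableSpace α] {μ : Measure α}
    {f g : Lp ℂ 2 μ} {F G : α → ℂ} (hf : ⇑f =ᵐ[μ] F) (hg : ⇑g =ᵐ[μ] G) :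
    inner ℂ f g = ∫ x, conj (F x) * G x ∂μ := by
  rw [L2.inner_def]
  refine integral_congr_ae ?_
  filter_upwards [hf, hg] with x hfx hgx
  rw [RCLike.inner_apply, hfx, hgx, mul_comm]

theorem conj_coherent_mul_harmonic_coherent (hbar x₀ p₀ s x : ℝ) (a : ℂ) :
    conj (coherent hbar x₀ p₀ x) * (cexp (2 * π * I * a * x) * coherent hbar x₀ p₀ (x + s)) =
      ((((π * hbar) ^ (-(1/4 : ℝ)) : ℝ) : ℂ)) ^ 2 *
        cexp (-(hbar : ℂ)⁻¹ * x ^ 2 + ((2 * x₀ - s) / hbar + 2 * π * I * a) * x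
          + (-(x₀ ^ 2 + (s - x₀) ^ 2) / (2 * hbar) + I * p₀ * s / hbar)) := by
  simp only [coherent, map_mul, ← exp_conj, map_sub, map_neg, Complex.conj_ofReal, conj_I]
  rw [show ∀ (c u u' v w w' : ℂ), c * cexp u * cexp u' * (cexp v * (c * cexp w * cexp w')) =
      c ^ 2 * cexp (u + u' + v + w + w') by
    intros; simp only [Complex.exp_add]; ring]
  congr 2
  push_cast
  field_simp
  ring

theorem rpow_neg_one_quarter_sq_mul_rpow_one_half {t : ℝ} (ht : 0 < t) :
    (t ^ (-(1/4 : ℝ))) ^ 2 * t ^ (1/2 : ℝ) = 1 := by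
  rw [← Real.rpow_natCast, ← Real.rpow_mul ht.le, ← Real.rpow_add ht]
  norm_num

theorem integral_conj_coherent_mul_harmonic_coherent {hbar : ℝ} (hh : 0 < hbar) (x₀ p₀ : ℝ)
    (a b : ℤ) :
    ∫ x : ℝ, conj (coherent hbar x₀ p₀ x) *
        (cexp (2 * π * I * a * x) * coherent hbar x₀ p₀ (x + 2 * π * hbar * b)) =
      cexp (2 * π * I * (a * x₀ + b * p₀) - π ^ 2 * hbar * (a ^ 2 + b ^ 2 + 2 * I * a * b)) := by
  have hπh : 0 < π * hbar := by positivity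
  have hhC : (hbar : ℂ) ≠ 0 := ofReal_ne_zero.mpr hh.ne'
  simp_rw [conj_coherent_mul_harmonic_coherent]
  rw [integral_const_mul, integral_cexp_quadratic (by simpa using hh),
    show (π : ℂ) / -(-(hbar : ℂ)⁻¹) = ((π * hbar : ℝ) : ℂ) by push_cast; field_simp,
    show (1 / 2 : ℂ) = ((1 / 2 : ℝ) : ℂ) by norm_num, ← ofReal_cpow hπh.le, ← mul_assoc,
    ← ofReal_pow, ← ofReal_mul, rpow_neg_one_quarter_sq_mul_rpow_one_half hπh, ofReal_one, one_mul]
  congr 1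
  push_cast
  field_simp
  ring_nf
  rw [I_sq]
  ring

end

/-- Coherent-state expectation of quantized harmonics in the classical limit:
`⟪φ_ħ^{x₀,p₀}, W_{a,b} φ_ħ^{x₀,p₀}⟫ → e^{2πi(a x₀ + b p₀)}` as `ħ → 0⁺`, where
`(W_{a,b} f)(x) = e^{2πiax} f(x + 2πħb)`. -/
theorem coherent_harmonic_expectation_classical_limit
    (φ : ℝ → ℝ → ℝ → HL2)
    (hφ : ∀ hbar : ℝ, 0 < hbar → ∀ x₀ p₀ : ℝ,
      ⇑(φ hbar x₀ p₀) =ᵐ[volume] coherent hbar x₀ p₀)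
    (W : ℝ → ℤ → ℤ → HL2 →L[ℂ] HL2)
    (hW : ∀ hbar : ℝ, 0 < hbar → ∀ a b : ℤ, ∀ f : HL2,
      ⇑(W hbar a b f) =ᵐ[volume] fun x =>
        Complex.exp (2 * Real.pi * Complex.I * (a : ℂ) * (x : ℂ)) *
          f (x + 2 * Real.pi * hbar * b))
    (x₀ p₀ : ℝ) (a b : ℤ) :
    Tendsto (fun hbar : ℝ => (inner ℂ (φ hbar x₀ p₀) (W hbar a b (φ hbar x₀ p₀)) : ℂ))
      (𝓝[>] (0 : ℝ))
      (𝓝 (Complex.exp (2 * Real.pi * Complex.I * ((a : ℂ) * (x₀ : ℂ) + (b : ℂ) * (p₀ : ℂ))))) := by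
  have hclosed : ∀ hbar ∈ Set.Ioi (0 : ℝ),
      Complex.exp (2 * Real.pi * Complex.I * (a * x₀ + b * p₀)
        - Real.pi ^ 2 * hbar * (a ^ 2 + b ^ 2 + 2 * Complex.I * a * b)) =
      inner ℂ (φ hbar x₀ p₀) (W hbar a b (φ hbar x₀ p₀)) := by
    intro hbar hh
    have hshift := (measurePreserving_add_right volume (2 * Real.pi * hbar * b))
      |>.quasiMeasurePreserving.ae_eq_comp (hφ hbar hh x₀ p₀)
    rw [inner_eq_integral_conj_mul_of_ae_eq (hφ hbar hh x₀ p₀)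
      ((hW hbar hh a b _).trans (EventuallyEq.rfl.mul hshift))]
    exact (integral_conj_coherent_mul_harmonic_coherent hh x₀ p₀ a b).symm
  refine Tendsto.congr' (eventually_nhdsWithin_of_forall hclosed) ?_
  have hcont : Continuous fun hbar : ℝ => Complex.exp (2 * Real.pi * Complex.I * (a * x₀ + b * p₀)
      - Real.pi ^ 2 * hbar * (a ^ 2 + b ^ 2 + 2 * Complex.I * a * b)) := by
    fun_prop
  simpa using (hcont.tendsto 0).mono_left nhdsWithin_le_nhds

end
end

section
/- Localization of coherent states under the projection L: let L be multiplication by the indicator χ_l of ⋃_{k∈ℤ}[k,k+1/2). For (x₀,p₀) ∈ ℝ², if fract(x₀) ∈ (0,1/2) then ‖L φ_ħ^{x₀,p₀}‖² → 1 as ħ → 0⁺, while if fract(x₀) ∈ (1/2,1) then ‖L φ_ħ^{x₀,p₀}‖² → 0 as ħ → 0⁺. -/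
open MeasureTheory Filter Topology

noncomputable section

/-!
`‖φ_ħ^{x₀,p₀}(x)‖²` is the density of the normal law `N(x₀, ħ/2)`, so `‖L φ_ħ^{x₀,p₀}‖²` is the
mass this law gives to `⋃ₖ [k, k+1/2)`. By Chebyshev's inequality a normal law of variance `v`
gives mass at most `v / δ²` to the complement of the `δ`-ball around its mean. If `fract x₀` lies
in `(0, 1/2)` resp. `(1/2, 1)`, then `x₀` is an interior point of `⋃ₖ [k, k+1/2)` resp. of its
complement, and the mass tends to `1` resp. `0`.
-/

open ProbabilityTheory

theorem Int.fract_preimage_mem_nhds {α : Type*} [Ring α] [LinearOrder α] [FloorRing α]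
    [TopologicalSpace α] [OrderClosedTopology α] [IsTopologicalAddGroup α] {x : α} {U : Set α}
    (hU : IsOpen U) (hxU : Int.fract x ∈ U) (hx : Int.fract x ≠ 0) :
    Int.fract ⁻¹' U ∈ 𝓝 x :=
  (continuousAt_fract (sub_ne_zero.mp hx)).preimage_mem_nhds (hU.mem_nhds hxU)

theorem MeasureTheory.L2.sq_norm_eq_integral_of_ae_eq {α E : Type*} [MeasurableSpace α]
    {μ : Measure α} [NormedAddCommGroup E] [InnerProductSpace ℝ E] {g : α →₂[μ] E}
    {f : α → E} (hg : g =ᵐ[μ] f) : ‖g‖ ^ 2 = ∫ x, ‖f x‖ ^ 2 ∂μ := by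
  rw [← real_inner_self_eq_norm_sq, L2.inner_def]
  refine integral_congr_ae ?_
  filter_upwards [hg] with x hx
  rw [hx, real_inner_self_eq_norm_sq]

theorem sq_norm_coherent {hbar : ℝ} (hbar_pos : 0 < hbar) (x₀ p₀ x : ℝ) :
    ‖coherent hbar x₀ p₀ x‖ ^ 2 = gaussianPDFReal x₀ (hbar / 2).toNNReal x := by
  have hπh : 0 < Real.pi * hbar := by positivity
  have hamp : ((Real.pi * hbar) ^ (-(1 / 4 : ℝ))) ^ 2 = (√(2 * Real.pi * (hbar / 2)))⁻¹ := by
    rw [← Real.rpow_natCast, ← Real.rpow_mul hπh.le, Real.sqrt_eq_rpow,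
      ← Real.rpow_neg (by positivity)]
    ring_nf
  have hexp : Real.exp (-((x - x₀) ^ 2 / (2 * hbar))) ^ 2
      = Real.exp (-(x - x₀) ^ 2 / (2 * (hbar / 2))) := by
    rw [← Real.exp_nat_mul]
    field_simp
    ring_nf
  rw [gaussianPDFReal, Real.coe_toNNReal _ (by positivity), coherent, norm_mul, norm_mul,
    Complex.norm_real, Real.norm_of_nonneg (by positivity), Complex.norm_exp, Complex.norm_exp]
  simp only [Complex.sub_re, Complex.mul_re, Complex.I_re, Complex.I_im, Complex.ofReal_re,
    Complex.ofReal_im, Complex.neg_re]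
  simp only [zero_mul, one_mul, sub_self, Real.exp_zero, mul_one, mul_pow, hamp, hexp]

theorem sq_norm_chiL_mul (f : ℝ → ℂ) (x : ℝ) :
    ‖chiL x * f x‖ ^ 2 = {y | Int.fract y < 1 / 2}.indicator (fun y => ‖f y‖ ^ 2) x := by
  by_cases hx : Int.fract x < 1 / 2
  · rw [Set.indicator_of_mem (s := {y | Int.fract y < 1 / 2}) hx, chiL, if_pos hx, one_mul]
  · rw [Set.indicator_of_notMem (s := {y | Int.fract y < 1 / 2}) hx, chiL, if_neg hx, zero_mul,
      norm_zero, sq, mul_zero]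

theorem sq_norm_chiL_mul_coherent_eq_gaussianReal {hbar : ℝ} (hbar_pos : 0 < hbar)
    {x₀ p₀ : ℝ} {g : HL2} (hg : ⇑g =ᵐ[volume] coherent hbar x₀ p₀) (L : HL2 →L[ℂ] HL2)
    (hL : ∀ f : HL2, ⇑(L f) =ᵐ[volume] fun x => chiL x * f x) :
    ‖L g‖ ^ 2 = (gaussianReal x₀ (hbar / 2).toNNReal).real {x | Int.fract x < 1 / 2} := by
  have hLg : ⇑(L g) =ᵐ[volume] fun x => chiL x * coherent hbar x₀ p₀ x := by
    filter_upwards [hL g, hg] with x hLx hx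
    rw [hLx, hx]
  have hS : MeasurableSet {x : ℝ | Int.fract x < 1 / 2} :=
    measurableSet_lt measurable_fract measurable_const
  rw [L2.sq_norm_eq_integral_of_ae_eq hLg, measureReal_def,
    gaussianReal_apply_eq_integral _ (by simpa using hbar_pos), ENNReal.toReal_ofReal
      (setIntegral_nonneg hS fun x _ => gaussianPDFReal_nonneg _ _ x), ← integral_indicator hS]
  simp only [sq_norm_chiL_mul, sq_norm_coherent hbar_pos]

theorem gaussianReal_real_le_of_ball_subset_compl {μ δ : ℝ} (hδ : 0 < δ) {s : Set ℝ}
    (hs : Metric.ball μ δ ⊆ sᶜ) (v : NNReal) : (gaussianReal μ v).real s ≤ v / δ ^ 2 := by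
  have hsub : s ⊆ {x | δ ≤ |id x - ∫ y, y ∂gaussianReal μ v|} := by
    intro x hx
    by_contra hlt
    rw [Set.mem_ofPred_eq, id, integral_id_gaussianReal, not_le, ← Real.dist_eq] at hlt
    exact hs hlt hx
  calc (gaussianReal μ v).real s
      ≤ (gaussianReal μ v).real {x | δ ≤ |id x - ∫ y, y ∂gaussianReal μ v|} :=
        measureReal_mono hsub
    _ ≤ Var[id; gaussianReal μ v] / δ ^ 2 :=
        ENNReal.toReal_le_of_le_ofReal (div_nonneg (variance_nonneg _ _) (sq_nonneg δ))
          (meas_ge_le_variance_div_sq (memLp_id_gaussianReal 2) hδ)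
    _ = v / δ ^ 2 := by rw [variance_id_gaussianReal]

theorem tendsto_gaussianReal_real_of_compl_mem_nhds {μ : ℝ} {s : Set ℝ} (hs : sᶜ ∈ 𝓝 μ) :
    Tendsto (fun v : NNReal => (gaussianReal μ v).real s) (𝓝 0) (𝓝 0) := by
  obtain ⟨δ, hδ, hball⟩ := Metric.mem_nhds_iff.mp hs
  have hbound : Tendsto (fun v : NNReal => (v : ℝ) / δ ^ 2) (𝓝 0) (𝓝 0) := by
    simpa using (NNReal.continuous_coe.tendsto 0).div_const (δ ^ 2)
  exact squeeze_zero (fun v => measureReal_nonneg)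
    (gaussianReal_real_le_of_ball_subset_compl hδ hball) hbound

theorem tendsto_gaussianReal_real_of_mem_nhds {μ : ℝ} {s : Set ℝ} (hs : s ∈ 𝓝 μ)
    (hsm : MeasurableSet s) :
    Tendsto (fun v : NNReal => (gaussianReal μ v).real s) (𝓝 0) (𝓝 1) := by
  have hcompl := tendsto_gaussianReal_real_of_compl_mem_nhds (s := sᶜ) (by rwa [compl_compl])
  simpa [probReal_compl_eq_one_sub hsm] using hcompl.const_sub 1

/-- Localization of coherent states under the projection `L` (multiplication by the
indicator of `⋃ₖ [k, k+1/2)`): if `fract x₀ ∈ (0, 1/2)` then `‖L φ_ħ^{x₀,p₀}‖² → 1` and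
if `fract x₀ ∈ (1/2, 1)` then `‖L φ_ħ^{x₀,p₀}‖² → 0`, as `ħ → 0⁺`. -/
theorem coherent_localization_L
    (φ : ℝ → ℝ → ℝ → HL2)
    (hφ : ∀ hbar : ℝ, 0 < hbar → ∀ x₀ p₀ : ℝ,
      ⇑(φ hbar x₀ p₀) =ᵐ[volume] coherent hbar x₀ p₀)
    (L : HL2 →L[ℂ] HL2)
    (hL : ∀ f : HL2, ⇑(L f) =ᵐ[volume] fun x => chiL x * f x)
    (x₀ p₀ : ℝ) :
    (Int.fract x₀ ∈ Set.Ioo (0 : ℝ) (1/2) →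
      Tendsto (fun hbar : ℝ => ‖L (φ hbar x₀ p₀)‖ ^ 2) (𝓝[>] (0 : ℝ)) (𝓝 1)) ∧
    (Int.fract x₀ ∈ Set.Ioo (1/2 : ℝ) 1 →
      Tendsto (fun hbar : ℝ => ‖L (φ hbar x₀ p₀)‖ ^ 2) (𝓝[>] (0 : ℝ)) (𝓝 0)) := by
  set S := {x : ℝ | Int.fract x < 1 / 2}
  have hvar : Tendsto (fun hbar : ℝ => (hbar / 2).toNNReal) (𝓝[>] 0) (𝓝 0) := by
    have h := (continuous_real_toNNReal.comp (continuous_id.div_const (2 : ℝ))).tendsto 0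
    simpa [Function.comp_def] using h.mono_left nhdsWithin_le_nhds
  have hnorm : (fun hbar : ℝ => (gaussianReal x₀ (hbar / 2).toNNReal).real S)
      =ᶠ[𝓝[>] 0] fun hbar => ‖L (φ hbar x₀ p₀)‖ ^ 2 := by
    filter_upwards [self_mem_nhdsWithin] with hbar hbar_pos
    exact (sq_norm_chiL_mul_coherent_eq_gaussianReal hbar_pos (hφ hbar hbar_pos x₀ p₀) L hL).symm
  constructor
  · rintro ⟨hpos, hlt⟩
    have hSx : S ∈ 𝓝 x₀ := Int.fract_preimage_mem_nhds isOpen_Iio hlt hpos.ne'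
    exact ((tendsto_gaussianReal_real_of_mem_nhds hSx
      (measurableSet_lt measurable_fract measurable_const)).comp hvar).congr' hnorm
  · rintro ⟨hgt, -⟩
    have hSx : Sᶜ ∈ 𝓝 x₀ :=
      mem_of_superset (Int.fract_preimage_mem_nhds isOpen_Ioi hgt (by linarith))
        fun x (hx : 1 / 2 < Int.fract x) => hx.not_gt
    exact ((tendsto_gaussianReal_real_of_compl_mem_nhds hSx).comp hvar).congr' hnorm

end
end

section
/- Invariance of periodic boundary conditions: suppose ħ = 1/(2πN) for some positive integer N (i.e. Planck's constant h = 2πħ = 1/N). Then the baker's map propagator satisfies the intertwining relation X^{1}∘F = F∘X^{2} as operators on L²(ℝ), where X^s is multiplication by e^{isx/ħ}. -/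
open MeasureTheory Filter Topology

noncomputable section

/-! Since `1/ħ = 2πN`, the modulation `X² = e^{4πiNx}` is `1/2`-periodic in `x`, so it commutes
with the shift `Y^{-1/2}` as well as with the multiplication operators `L`, `R`, `X^{-1}`.
Conjugated by `𝓕` it becomes the shift `p ↦ p - 2`, which preserves `χ_e` and `χ_o`, so it also
commutes with `E_p` and `O_p`. Finally `X¹ S = S X²`, because `S` dilates `x` by `2`. -/

open Complex

theorem commute_of_ae_mul {A B : HL2 →L[ℂ] HL2} {a b : ℝ → ℂ}
    (hA : ∀ f : HL2, ⇑(A f) =ᵐ[volume] fun x => a x * f x)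
    (hB : ∀ f : HL2, ⇑(B f) =ᵐ[volume] fun x => b x * f x) : Commute A B := by
  ext1 f
  refine Lp.ext ?_
  filter_upwards [hA (B f), hB f, hB (A f), hA f] with x hAB hBf hBA hAf
  simp only [mul_apply_eq_comp, hAB, hBf, hBA, hAf]
  ring

theorem apply_translate_comm_of_periodic {A T : HL2 → HL2} {m : ℝ → ℂ} {s : ℝ}
    (hA : ∀ f : HL2, ⇑(A f) =ᵐ[volume] fun x => m x * f x)
    (hT : ∀ f : HL2, ⇑(T f) =ᵐ[volume] fun x => f (x + s))
    (hm : ∀ x, m (x + s) = m x) (f : HL2) : A (T f) = T (A f) := by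
  have hAf_shift :=
    (measurePreserving_add_right volume s).quasiMeasurePreserving.ae_eq_comp (hA f)
  refine Lp.ext ?_
  filter_upwards [hA (T f), hT f, hT (A f), hAf_shift] with x hAT hTf hTA hAf
  simp only [Function.comp_apply] at hAf
  rw [hAT, hTf, hTA, hAf, hm]

theorem apply_dilate_eq_dilate_apply {A B S : HL2 → HL2} {a b : ℝ → ℂ} {c : ℂ} {t : ℝ}
    (ht : t ≠ 0)
    (hA : ∀ f : HL2, ⇑(A f) =ᵐ[volume] fun x => a x * f x)
    (hB : ∀ f : HL2, ⇑(B f) =ᵐ[volume] fun x => b x * f x)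
    (hS : ∀ f : HL2, ⇑(S f) =ᵐ[volume] fun x => c * f (x / t))
    (hab : ∀ x, a x = b (x / t)) (f : HL2) : A (S f) = S (B f) := by
  have hdil : Measure.QuasiMeasurePreserving (fun x : ℝ => x / t) volume volume := by
    simpa only [smul_eq_mul, div_eq_inv_mul] using
      Measure.quasiMeasurePreserving_smul (E := ℝ) volume (inv_ne_zero ht)
  have hBf_dil := hdil.ae_eq_comp (hB f)
  refine Lp.ext ?_
  filter_upwards [hA (S f), hS f, hS (B f), hBf_dil] with x hAS hSf hSB hBf
  simp only [Function.comp_apply] at hBf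
  rw [hAS, hSf, hSB, hBf, hab]
  ring

theorem fourierFormula_exp_mul (hbar s : ℝ) (f : ℝ → ℂ) (p : ℝ) :
    fourierFormula hbar (fun x => exp (I * s * x / hbar) * f x) p
      = fourierFormula hbar f (p - s) := by
  unfold fourierFormula
  congr 2 with x
  rw [← mul_assoc, ← Complex.exp_add]
  push_cast
  ring_nf

theorem integrable_exp_mul (hbar s : ℝ) {f : ℝ → ℂ} (hf : Integrable f) :
    Integrable (fun x : ℝ => exp (I * s * x / hbar) * f x) := by
  refine hf.bdd_mul (c := 1) (by fun_prop) (Eventually.of_forall fun x => ?_)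
  rw [show I * s * x / hbar = ((s * x / hbar : ℝ) : ℂ) * I by push_cast; ring,
    norm_exp_ofReal_mul_I]

-- Both sides are continuous in `f`, and on the dense subspace of simple functions, which are
-- integrable, `𝓕` is given by the integral formula.
theorem fourier_exp_mul_ae_eq_translate {hbar s : ℝ} {𝓕 : HL2 ≃ₗᵢ[ℂ] HL2}
    (h𝓕 : ∀ f : HL2, Integrable (⇑f) volume → ⇑(𝓕 f) =ᵐ[volume] fourierFormula hbar (⇑f))
    {X : HL2 →L[ℂ] HL2}
    (hX : ∀ f : HL2, ⇑(X f) =ᵐ[volume] fun x => exp (I * s * x / hbar) * f x) (f : HL2) :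
    ⇑(𝓕 (X f)) =ᵐ[volume] fun p => 𝓕 f (p - s) := by
  have hshift : MeasurePreserving (fun p : ℝ => p - s) volume volume :=
    measurePreserving_sub_right volume s
  let T : HL2 → HL2 := Lp.compMeasurePreserving (fun p : ℝ => p - s) hshift
  suffices h : ∀ f, 𝓕 (X f) = T (𝓕 f) by
    rw [h]; exact Lp.coeFn_compMeasurePreserving _ hshift
  have hcont : Continuous fun f : HL2 => T (𝓕 f) :=
    (Lp.isometry_compMeasurePreserving hshift).continuous.comp 𝓕.continuous
  refine congrFun (Continuous.ext_on (Lp.simpleFunc.dense (by norm_num))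
    (𝓕.continuous.comp X.continuous) hcont fun g hg => ?_)
  have hg_int : Integrable (⇑g) volume :=
    ((SimpleFunc.memLp_iff_integrable (by norm_num) (by norm_num)).mp
      (Lp.simpleFunc.memLp ⟨g, hg⟩)).congr (Lp.simpleFunc.toSimpleFunc_eq_toFun ⟨g, hg⟩)
  refine Lp.ext ((h𝓕 _ ((integrable_exp_mul hbar s hg_int).congr (hX g).symm)).trans ?_)
  refine EventuallyEq.trans ?_ ((Lp.coeFn_compMeasurePreserving _ hshift).trans
    (hshift.quasiMeasurePreserving.ae_eq_comp (h𝓕 g hg_int))).symm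
  refine Eventually.of_forall fun p => ?_
  simp only [Function.comp_apply, ← fourierFormula_exp_mul]
  unfold fourierFormula
  congr 1
  exact integral_congr_ae (by filter_upwards [hX g] with x hx; rw [hx])

theorem commute_of_fourier_mul_of_periodic {𝓕 : HL2 ≃ₗᵢ[ℂ] HL2} {E X : HL2 →L[ℂ] HL2}
    {χ : ℝ → ℂ} {s : ℝ}
    (hE : ∀ f : HL2, ⇑(𝓕 (E f)) =ᵐ[volume] fun p => χ p * 𝓕 f p)
    (hX : ∀ f : HL2, ⇑(𝓕 (X f)) =ᵐ[volume] fun p => 𝓕 f (p - s))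
    (hχ : ∀ p, χ (p - s) = χ p) : Commute X E := by
  ext1 f
  apply 𝓕.injective
  symm
  simpa using apply_translate_comm_of_periodic (A := fun g => 𝓕 (E (𝓕.symm g)))
    (T := fun g => 𝓕 (X (𝓕.symm g))) (m := χ) (s := -s)
    (fun g => by simpa using hE (𝓕.symm g))
    (fun g => by simpa [← sub_eq_add_neg] using hX (𝓕.symm g))
    (fun p => by rw [← sub_eq_add_neg, hχ]) (𝓕 f)

theorem chiE_sub_two (p : ℝ) : chiE (p - 2) = chiE p := by
  simp [chiE, Int.floor_sub_ofNat]

theorem chiO_sub_two (p : ℝ) : chiO (p - 2) = chiO p := by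
  simp [chiO, Int.floor_sub_ofNat]

theorem exp_mul_add_eq_of_hbar_eq {hbar : ℝ} {N : ℕ} (hbar_eq : hbar = 1 / (2 * Real.pi * N))
    {s t : ℝ} {k : ℤ} (hst : s * t = k) (x : ℝ) :
    exp (I * s * ↑(x + t) / hbar) = exp (I * s * x / hbar) := by
  have hphase :
      I * s * ↑(x + t) / hbar = I * s * x / hbar + (N * k : ℤ) * (2 * Real.pi * I) := by
    have hst' : (s : ℂ) * t = k := by exact_mod_cast hst
    rw [hbar_eq]
    push_cast
    simp only [div_div_eq_mul_div, div_one]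
    linear_combination (2 * Real.pi * N * I) * hst'
  rw [hphase, exp_add, exp_int_mul_two_pi_mul_I, mul_one]

theorem bakerPropagator_intertwines_X_general (hbar : ℝ)
    (hN : ∃ N : ℕ, 0 < N ∧ hbar = 1 / (2 * Real.pi * N))
    (𝓕 : HL2 ≃ₗᵢ[ℂ] HL2)
    (h𝓕 : ∀ f : HL2, Integrable (⇑f) volume → ⇑(𝓕 f) =ᵐ[volume] fourierFormula hbar (⇑f))
    (L R Ep Op S : HL2 →L[ℂ] HL2) (X Y : ℝ → HL2 →L[ℂ] HL2)
    (hL : ∀ f : HL2, ⇑(L f) =ᵐ[volume] fun x => chiL x * f x)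
    (hR : ∀ f : HL2, ⇑(R f) =ᵐ[volume] fun x => chiR x * f x)
    (hEp : ∀ f : HL2, ⇑(𝓕 (Ep f)) =ᵐ[volume] fun p => chiE p * (𝓕 f) p)
    (hOp : ∀ f : HL2, ⇑(𝓕 (Op f)) =ᵐ[volume] fun p => chiO p * (𝓕 f) p)
    (hX : ∀ s : ℝ, ∀ f : HL2,
      ⇑(X s f) =ᵐ[volume] fun x => Complex.exp (Complex.I * s * x / hbar) * f x)
    (hY : ∀ s : ℝ, ∀ f : HL2, ⇑(Y s f) =ᵐ[volume] fun x => f (x + s))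
    (hS : ∀ f : HL2, ⇑(S f) =ᵐ[volume] fun x => ((Real.sqrt 2 : ℝ) : ℂ)⁻¹ * f (x / 2)) :
    X 1 ∘L (S ∘L (L + X (-1) ∘L R) ∘L (Ep + Y (-(1/2)) ∘L Op))
      = (S ∘L (L + X (-1) ∘L R) ∘L (Ep + Y (-(1/2)) ∘L Op)) ∘L X 2 := by
  obtain ⟨N, -, hbar_eq⟩ := hN
  have hXS : X 1 * S = S * X 2 := by
    ext1 f
    exact apply_dilate_eq_dilate_apply two_ne_zero (hX 1) (hX 2) hS
      (fun x => by congr 1; push_cast; ring) f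
  have hXY : Commute (X 2) (Y (-(1/2))) := by
    ext1 f
    exact apply_translate_comm_of_periodic (hX 2) (hY _)
      (exp_mul_add_eq_of_hbar_eq hbar_eq (k := -1) (by norm_num)) f
  have hFX := fourier_exp_mul_ae_eq_translate h𝓕 (hX 2)
  have hXA : Commute (X 2) (L + X (-1) * R) :=
    (commute_of_ae_mul (hX 2) hL).add_right
      ((commute_of_ae_mul (hX 2) (hX (-1))).mul_right (commute_of_ae_mul (hX 2) hR))
  have hXB : Commute (X 2) (Ep + Y (-(1/2)) * Op) :=
    (commute_of_fourier_mul_of_periodic hEp hFX chiE_sub_two).add_right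
      (hXY.mul_right (commute_of_fourier_mul_of_periodic hOp hFX chiO_sub_two))
  simp only [← ContinuousLinearMap.mul_def]
  calc X 1 * (S * (L + X (-1) * R) * (Ep + Y (-(1/2)) * Op))
      = S * (X 2 * ((L + X (-1) * R) * (Ep + Y (-(1/2)) * Op))) := by
        rw [mul_assoc S, ← mul_assoc, hXS, mul_assoc]
    _ = S * (L + X (-1) * R) * (Ep + Y (-(1/2)) * Op) * X 2 := by
        rw [(hXA.mul_right hXB).eq]; simp only [mul_assoc]

/-- Invariance of periodic boundary conditions: if `ħ = 1/(2πN)` for a positive integer `N`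
(i.e. Planck's constant `h = 2πħ = 1/N`), then the baker's map propagator
`F = S (L + X^{−1} R)(E_p + Y^{−1/2} O_p)` satisfies `X¹ F = F X²`. -/
theorem bakerPropagator_intertwines_X (hbar : ℝ) (hhb : 0 < hbar)
    (hN : ∃ N : ℕ, 0 < N ∧ hbar = 1 / (2 * Real.pi * N))
    (𝓕 : HL2 ≃ₗᵢ[ℂ] HL2)
    (h𝓕 : ∀ f : HL2, Integrable (⇑f) volume → ⇑(𝓕 f) =ᵐ[volume] fourierFormula hbar (⇑f))
    (L R Ep Op S : HL2 →L[ℂ] HL2) (X Y : ℝ → HL2 →L[ℂ] HL2)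
    (hL : ∀ f : HL2, ⇑(L f) =ᵐ[volume] fun x => chiL x * f x)
    (hR : ∀ f : HL2, ⇑(R f) =ᵐ[volume] fun x => chiR x * f x)
    (hEp : ∀ f : HL2, ⇑(𝓕 (Ep f)) =ᵐ[volume] fun p => chiE p * (𝓕 f) p)
    (hOp : ∀ f : HL2, ⇑(𝓕 (Op f)) =ᵐ[volume] fun p => chiO p * (𝓕 f) p)
    (hX : ∀ s : ℝ, ∀ f : HL2,
      ⇑(X s f) =ᵐ[volume] fun x => Complex.exp (Complex.I * s * x / hbar) * f x)
    (hY : ∀ s : ℝ, ∀ f : HL2, ⇑(Y s f) =ᵐ[volume] fun x => f (x + s))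
    (hS : ∀ f : HL2, ⇑(S f) =ᵐ[volume] fun x => ((Real.sqrt 2 : ℝ) : ℂ)⁻¹ * f (x / 2)) :
    X 1 ∘L (S ∘L (L + X (-1) ∘L R) ∘L (Ep + Y (-(1/2)) ∘L Op))
      = (S ∘L (L + X (-1) ∘L R) ∘L (Ep + Y (-(1/2)) ∘L Op)) ∘L X 2 :=
  bakerPropagator_intertwines_X_general hbar hN 𝓕 h𝓕 L R Ep Op S X Y hL hR hEp hOp hX hY hS

end
end
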